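/- Let F be a finite family of integer intervals satisfying the facet conditions, and suppose the unit interval (γ,γ+1) with 1 ≤ γ < c is not a leaf of the tree of F. Then the smallest interval of F containing (γ,γ+1) is of the form (γ′,γ+1) or (γ,γ′) for some integer γ′, and it has a unique child in the tree, namely (γ′,γ) or (γ+1,γ′) respectively. -/

import Mathlib

namespace ScrollComb

/-- Open intervals with integer endpoints, identified with pairs `(a, b)`, `a < b`. -/
abbrev Iv : Type := ℤ × ℤ

/-- `I` is contained in `J` as open real intervals. -/
def Sub (I J : Iv) : Prop := J.1 ≤ I.1 ∧ I.2 ≤ J.2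

/-- The length of an interval. -/
def len (I : Iv) : ℤ := I.2 - I.1

/-- Two open intervals with integer endpoints are disjoint. -/
def Disj (I J : Iv) : Prop := I.2 ≤ J.1 ∨ J.2 ≤ I.1

/-- `I` is a child of `J` in the Hasse diagram of `(F, ⊆)`:  `I ⊊ J` and nothing of `F`
lies strictly between them. -/
def IsChild (F : Finset Iv) (I J : Iv) : Prop :=
  I ∈ F ∧ J ∈ F ∧ Sub I J ∧ I ≠ J ∧
    ∀ K ∈ F, Sub I K → Sub K J → K = I ∨ K = J

/-- `I` is a leaf (a minimal element) of the family `F`. -/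
def IsLeaf (F : Finset Iv) (I : Iv) : Prop :=
  I ∈ F ∧ ∀ K ∈ F, Sub K I → K = I

/-- The prescribed leaves set `𝔏_α`: the unit intervals `(β, β+1)` for
`β ∈ {α, …, α+ℓ} ∪ {c-d+ℓ-1, …, c-1}`. -/
noncomputable def leavesSet (c d α ℓ : ℤ) : Finset Iv :=
  (Finset.Icc α (α + ℓ) ∪ Finset.Icc (c - d + ℓ - 1) (c - 1)).image fun β => (β, β + 1)

/-- The structural conditions on a facet family:  a non-crossing family of open integer
subintervals of `(1, c)` whose Hasse diagram under inclusion is a rooted binary tree with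
root `(1, c)`, satisfying the length conditions on nodes with one child resp. two children. -/
structure IsTreeFam (c : ℤ) (F : Finset Iv) : Prop where
  bounds : ∀ I ∈ F, 1 ≤ I.1 ∧ I.1 < I.2 ∧ I.2 ≤ c
  root_mem : ((1 : ℤ), c) ∈ F
  noncrossing : ∀ I ∈ F, ∀ J ∈ F, Disj I J ∨ Sub I J ∨ Sub J I
  binary : ∀ J ∈ F, {I | IsChild F I J}.ncard ≤ 2
  one_child : ∀ J ∈ F, ∀ I, IsChild F I J → (∀ I', IsChild F I' J → I' = I) →
    len J = len I + 1 ∧ (J.1 < I.1 → (J.1, J.1 + 1) ∉ F) ∧ (I.2 < J.2 → (I.2, I.2 + 1) ∉ F)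
  two_children : ∀ J ∈ F, ∀ I₁ I₂, IsChild F I₁ J → IsChild F I₂ J → I₁ ≠ I₂ →
    Disj I₁ I₂ ∧ len I₁ + len I₂ = len J

/-- A facet family with prescribed leaves data `(α, ℓ)`. -/
structure IsScrollFacetWith (c d α ℓ : ℤ) (F : Finset Iv) : Prop where
  tree : IsTreeFam c F
  α_lb : 1 ≤ α
  α_ub : α ≤ c - d - 2
  ℓ_lb : 2 ≤ ℓ
  ℓ_ub : ℓ ≤ d + 1
  leaves : ∀ I, IsLeaf F I ↔ I ∈ leavesSet c d α ℓ

/-- A facet of the initial complex of the fiber cone of a rational normal scroll. -/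
def IsScrollFacet (c d : ℤ) (F : Finset Iv) : Prop :=
  ∃ α ℓ, IsScrollFacetWith c d α ℓ F

/-! By minimality of `J`, every child of `J` misses the unit interval `(γ, γ+1)`. Two disjoint
children missing it would have total length less than `len J`, so `J` has a unique child `I`;
then `len J = len I + 1` forces `I` to be all of `J` except `(γ, γ+1)`, which therefore sits at
one end of `J`. -/

theorem Sub.antisymm {I J : Iv} (h₁ : Sub I J) (h₂ : Sub J I) : I = J :=
  Prod.ext (le_antisymm h₂.1 h₁.1) (le_antisymm h₁.2 h₂.2)

theorem Sub.eq_of_len_le {I K : Iv} (h : Sub I K) (hlen : len K ≤ len I) : I = K := by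
  obtain ⟨h₁, h₂⟩ := h
  unfold len at hlen
  ext <;> omega

theorem IsScrollFacetWith.exists_eq_unit_of_isLeaf {c d α ℓ : ℤ} {F : Finset Iv} {I : Iv}
    (hF : IsScrollFacetWith c d α ℓ F) (hI : IsLeaf F I) : ∃ β, I = (β, β + 1) := by
  obtain ⟨β, -, hβ⟩ := Finset.mem_image.mp ((hF.leaves I).mp hI)
  exact ⟨β, hβ.symm⟩

/-- A longest proper subinterval of `J` in `F` is a child of `J`. -/
theorem exists_isChild_of_not_isLeaf {F : Finset Iv} {J : Iv} (hJ : J ∈ F)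
    (hleaf : ¬ IsLeaf F J) : ∃ I, IsChild F I J := by
  classical
  set S := F.filter fun K => Sub K J ∧ K ≠ J
  have hS : S.Nonempty := by
    simp only [IsLeaf, hJ, true_and, not_forall] at hleaf
    obtain ⟨K, hK, hKJ, hne⟩ := hleaf
    exact ⟨K, Finset.mem_filter.mpr ⟨hK, hKJ, hne⟩⟩
  obtain ⟨I, hI, hmax⟩ := S.exists_max_image len hS
  obtain ⟨hIF, hIJ, hne⟩ := Finset.mem_filter.mp hI
  refine ⟨I, hIF, hJ, hIJ, hne, fun K hK hIK hKJ => ?_⟩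
  by_cases hKJ' : K = J
  · exact Or.inr hKJ'
  · exact Or.inl (hIK.eq_of_len_le (hmax K (Finset.mem_filter.mpr ⟨hK, hKJ, hKJ'⟩))).symm

theorem IsChild.disj_unit_of_minimal {F : Finset Iv} {I J : Iv} {γ : ℤ} (hIJ : IsChild F I J)
    (hmin : ∀ K ∈ F, Sub (γ, γ + 1) K → Sub J K) : Disj I (γ, γ + 1) := by
  obtain ⟨hIF, -, hsub, hne, -⟩ := hIJ
  by_contra! h
  simp only [Disj, not_or, not_le] at h
  exact hne (hsub.antisymm (hmin I hIF ⟨by omega, by omega⟩))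

theorem IsTreeFam.isChild_unique_of_disj_unit {c γ : ℤ} {F : Finset Iv} {J : Iv}
    {I₁ I₂ : Iv} (hF : IsTreeFam c F) (hJ : Sub (γ, γ + 1) J) (h₁ : IsChild F I₁ J)
    (h₂ : IsChild F I₂ J) (hd₁ : Disj I₁ (γ, γ + 1)) (hd₂ : Disj I₂ (γ, γ + 1)) : I₁ = I₂ := by
  by_contra hne
  obtain ⟨hd, hlen⟩ := hF.two_children J h₁.2.1 I₁ I₂ h₁ h₂ hne
  obtain ⟨hJ₁, hJ₂⟩ := hJ
  obtain ⟨u₁, u₂⟩ := h₁.2.2.1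
  obtain ⟨v₁, v₂⟩ := h₂.2.2.1
  simp only [Disj, len] at hd hd₁ hd₂ hlen hJ₁ hJ₂
  omega

theorem eq_of_len_eq_add_one_of_disj_unit {γ : ℤ} {I J : Iv} (hJ : Sub (γ, γ + 1) J)
    (hIJ : Sub I J) (hd : Disj I (γ, γ + 1)) (hlen : len J = len I + 1) :
    ∃ γ', (J = (γ', γ + 1) ∧ I = (γ', γ)) ∨ (J = (γ, γ') ∧ I = (γ + 1, γ')) := by
  obtain ⟨hJ₁, hJ₂⟩ := hJ
  obtain ⟨h₁, h₂⟩ := hIJ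
  simp only [Disj, len] at hd hlen hJ₁ hJ₂
  rcases hd with hd | hd
  · refine ⟨J.1, Or.inl ⟨?_, ?_⟩⟩ <;> ext <;> dsimp <;> omega
  · refine ⟨J.2, Or.inr ⟨?_, ?_⟩⟩ <;> ext <;> dsimp <;> omega

theorem smallest_containing_not_leaf_general (c d : ℤ) (F : Finset Iv) (hF : IsScrollFacet c d F)
    (γ : ℤ) (hnotleaf : ¬ IsLeaf F (γ, γ + 1))
    (J : Iv) (hJF : J ∈ F) (hJ : Sub (γ, γ + 1) J)
    (hmin : ∀ K ∈ F, Sub (γ, γ + 1) K → Sub J K) :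
    ∃ γ' : ℤ,
      (J = (γ', γ + 1) ∧ IsChild F (γ', γ) J ∧ ∀ I, IsChild F I J → I = (γ', γ)) ∨
      (J = (γ, γ') ∧ IsChild F (γ + 1, γ') J ∧ ∀ I, IsChild F I J → I = (γ + 1, γ')) := by
  obtain ⟨α, ℓ, hS⟩ := hF
  have hJleaf : ¬ IsLeaf F J := by
    intro hleaf
    obtain ⟨β, rfl⟩ := hS.exists_eq_unit_of_isLeaf hleaf
    exact hnotleaf (hJ.eq_of_len_le (by simp [len]) ▸ hleaf)
  obtain ⟨I, hIJ⟩ := exists_isChild_of_not_isLeaf hJF hJleaf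
  have hdisj : ∀ K, IsChild F K J → Disj K (γ, γ + 1) := fun K hK => hK.disj_unit_of_minimal hmin
  have huniq : ∀ I', IsChild F I' J → I' = I := fun I' hI' =>
    hS.tree.isChild_unique_of_disj_unit hJ hI' hIJ (hdisj I' hI') (hdisj I hIJ)
  obtain ⟨hlen, -⟩ := hS.tree.one_child J hJF I hIJ huniq
  obtain ⟨γ', ⟨rfl, rfl⟩ | ⟨rfl, rfl⟩⟩ :=
    eq_of_len_eq_add_one_of_disj_unit hJ hIJ.2.2.1 (hdisj I hIJ) hlen
  exacts [⟨γ', Or.inl ⟨rfl, hIJ, huniq⟩⟩, ⟨γ', Or.inr ⟨rfl, hIJ, huniq⟩⟩]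

/-- If the unit interval `(γ,γ+1)`, `1 ≤ γ < c`, is not a leaf of the tree
of a facet family `F`, then the smallest interval of `F` containing `(γ,γ+1)` has the form
`(γ',γ+1)` or `(γ,γ')`, and it has a unique child, namely `(γ',γ)` resp. `(γ+1,γ')`. -/
theorem smallest_containing_not_leaf (c d : ℤ) (F : Finset Iv) (hF : IsScrollFacet c d F)
    (γ : ℤ) (hγ : 1 ≤ γ) (hγc : γ + 1 ≤ c) (hnotleaf : ¬ IsLeaf F (γ, γ + 1))
    (J : Iv) (hJF : J ∈ F) (hJ : Sub (γ, γ + 1) J)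
    (hmin : ∀ K ∈ F, Sub (γ, γ + 1) K → Sub J K) :
    ∃ γ' : ℤ,
      (J = (γ', γ + 1) ∧ IsChild F (γ', γ) J ∧ ∀ I, IsChild F I J → I = (γ', γ)) ∨
      (J = (γ, γ') ∧ IsChild F (γ + 1, γ') J ∧ ∀ I, IsChild F I J → I = (γ + 1, γ')) :=
  smallest_containing_not_leaf_general c d F hF γ hnotleaf J hJF hJ hmin

end ScrollComb
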